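/- arXiv:0712.1332 — 2 statements merged into one kernel-verified Lean document; each statement's English description precedes it below -/
import Mathlib

section
/- For every nonnegative integer k, the terminating hypergeometric sum ∑_{n=0}^{k} ((1/2)_n^2 (-k)_n)/(n!^2 (3/2+k)_n) * (4n+1) * (-1)^n equals Γ(3/2+k)/(Γ(3/2) Γ(1+k)). -/
/-! Write `S k` for the sum. Both `S k` and `(3/2)_k / k!`, which is the right-hand side since
`Γ(a + k) = (a)_k Γ(a)`, equal `1` at `k = 0` and satisfy `S (k + 1) = (3/2 + k) / (k + 1) * S k`.
For the sums this is the WZ method: `summand (k + 1) n - (3/2 + k) / (k + 1) * summand k n` is an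
explicit difference `G (n + 1) - G n`, and summing over `n ≤ k + 1` the telescope collapses, because
`(-k)_n = 0` for `n > k` kills the extra term `summand k (k + 1)` and the top end `G (k + 2)`. -/

open Finset

/-- Rising factorial (Pochhammer symbol) over the reals. -/
noncomputable def poch (a : ℝ) (n : ℕ) : ℝ := ∏ i ∈ Finset.range n, (a + i)

open scoped Nat

@[simp]
lemma poch_zero (a : ℝ) : poch a 0 = 1 := prod_range_zero _

lemma poch_succ (a : ℝ) (n : ℕ) : poch a (n + 1) = poch a n * (a + n) :=
  prod_range_succ _ n

lemma poch_succ_eq_mul_poch_add_one (a : ℝ) (n : ℕ) : poch a (n + 1) = a * poch (a + 1) n := by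
  simp only [poch, prod_range_succ', Nat.cast_add, Nat.cast_one, Nat.cast_zero, add_zero]
  rw [mul_comm]
  congr 1
  exact prod_congr rfl fun i _ ↦ by ring

lemma poch_pos {a : ℝ} (ha : 0 < a) (n : ℕ) : 0 < poch a n :=
  prod_pos fun _ _ ↦ by positivity

lemma poch_neg_natCast_eq_zero {k n : ℕ} (h : k < n) : poch (-k) n = 0 :=
  prod_eq_zero (mem_range.2 h) (neg_add_cancel _)

lemma Real.Gamma_add_natCast_eq_poch_mul {a : ℝ} (ha : ∀ m : ℕ, a ≠ -m) (n : ℕ) :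
    Real.Gamma (a + n) = poch a n * Real.Gamma a := by
  induction n with
  | zero => simp
  | succ n ih =>
    have hn : a + n ≠ 0 := fun h ↦ ha n (eq_neg_of_add_eq_zero_left h)
    rw [Nat.cast_succ, ← add_assoc, Real.Gamma_add_one hn, ih, poch_succ]
    ring

noncomputable def summand (x : ℝ) (n : ℕ) : ℝ :=
  poch (1/2) n ^ 2 * poch (-x) n / ((n ! : ℝ) ^ 2 * poch (3/2 + x) n) * (4 * n + 1) * (-1) ^ n

-- Found by Zeilberger's algorithm.
noncomputable def certificate (x : ℝ) : ℕ → ℝ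
  | 0 => 0
  | m + 1 => (2 * x + 3) / (x + 1) * (-1) ^ (m + 1) * poch (1/2) (m + 1) ^ 2 * poch (-x) m /
      ((m ! : ℝ) ^ 2 * poch (3/2 + x) (m + 1))

lemma summand_add_one_sub_eq_certificate_sub (x : ℝ) (hx : 0 ≤ x) (n : ℕ) :
    summand (x + 1) n - (3/2 + x) / (x + 1) * summand x n =
      certificate x (n + 1) - certificate x n := by
  cases n with
  | zero =>
    simp only [summand, certificate, poch_zero, poch_succ]
    field_simp
    ring
  | succ m =>
    have hS : poch (3/2 + x + 1) m ≠ 0 := (poch_pos (by positivity) m).ne'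
    set X := (-1) ^ (m + 1) * poch (1/2) (m + 1) ^ 2 * poch (-x) m /
      (((m + 1)! : ℝ) ^ 2 * poch (3/2 + x + 1) m)
    have h₁ : summand (x + 1) (m + 1) = X * (-(x + 1) * (4 * m + 5) / (5/2 + x + m)) := by
      have : -(x + 1) + 1 = -x := by ring
      simp only [summand, X, poch_succ_eq_mul_poch_add_one (-(x + 1)), this,
        show 3/2 + (x + 1) = 3/2 + x + 1 by ring, poch_succ (3/2 + x + 1) m]
      field_simp
      push_cast
      ring
    have h₂ : summand x (m + 1) = X * ((m - x) * (4 * m + 5) / (3/2 + x)) := by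
      simp only [summand, X, poch_succ (-x), poch_succ_eq_mul_poch_add_one (3/2 + x)]
      field_simp
      push_cast
      ring
    have h₃ : certificate x (m + 2) =
        X * (-2 * (3/2 + m) ^ 2 * (m - x) / ((x + 1) * (5/2 + x + m))) := by
      simp only [certificate, X, poch_succ (-x), poch_succ (1/2) (m + 1),
        poch_succ_eq_mul_poch_add_one (3/2 + x) (m + 1), poch_succ (3/2 + x + 1) m]
      field_simp
      push_cast
      ring
    have h₄ : certificate x (m + 1) = X * (2 * (m + 1) ^ 2 / (x + 1)) := by
      simp only [certificate, X, poch_succ_eq_mul_poch_add_one (3/2 + x), Nat.factorial_succ]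
      field_simp
      push_cast
      ring
    rw [h₁, h₂, h₃, h₄]
    field_simp
    ring

lemma summand_natCast_eq_zero {k n : ℕ} (h : k < n) : summand k n = 0 := by
  simp [summand, poch_neg_natCast_eq_zero h]

lemma certificate_natCast_eq_zero {k n : ℕ} (h : k < n) : certificate k (n + 1) = 0 := by
  simp [certificate, poch_neg_natCast_eq_zero h]

theorem sum_range_summand (k : ℕ) : ∑ n ∈ range (k + 1), summand k n = poch (3/2) k / k ! := by
  induction k with
  | zero => simp [summand]
  | succ k ih =>
    have telescope : ∑ n ∈ range (k + 2), summand (k + 1) n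
        - (3/2 + k) / (k + 1) * ∑ n ∈ range (k + 2), summand k n = 0 := by
      rw [mul_sum, ← sum_sub_distrib,
        sum_congr rfl fun n _ ↦ summand_add_one_sub_eq_certificate_sub k k.cast_nonneg n, sum_range_sub,
        certificate_natCast_eq_zero k.lt_succ_self, certificate, sub_zero]
    rw [sum_range_succ (summand k), summand_natCast_eq_zero k.lt_succ_self, add_zero, ih,
      sub_eq_zero, ← Nat.cast_succ] at telescope
    rw [telescope, poch_succ, Nat.factorial_succ]
    push_cast
    field_simp

theorem terminating_hypergeometric_sum (k : ℕ) :
    ∑ n ∈ Finset.range (k + 1),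
        (poch (1/2) n) ^ 2 * poch (-(k : ℝ)) n /
          ((n.factorial : ℝ) ^ 2 * poch (3/2 + k) n) * (4 * n + 1) * (-1) ^ n
      = Real.Gamma (3/2 + k) / (Real.Gamma (3/2) * Real.Gamma (1 + k)) := by
  have hne : ∀ m : ℕ, (3/2 : ℝ) ≠ -m := fun m ↦ by linarith [(m.cast_nonneg : (0 : ℝ) ≤ m)]
  have hΓ : Real.Gamma (3/2) ≠ 0 := (Real.Gamma_pos_of_pos (by norm_num)).ne'
  rw [Real.Gamma_add_natCast_eq_poch_mul hne, add_comm (1 : ℝ), Real.Gamma_nat_eq_factorial,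
    mul_comm (Real.Gamma _), mul_div_mul_right _ _ hΓ]
  exact sum_range_summand k
end

section
/- The sequence w_n = ∑_{k=0}^{n} C(2k,k)^3 C(2n-2k,n-k) 16^{n-k} satisfies the recurrence (n+1)^3 w_{n+1} - 8(2n+1)(8n^2+8n+5) w_n + 4096 n^3 w_{n-1} = 0 for all n ≥ 1. -/
open Finset

/-- The sequence `w_n`. -/
def wSeq (n : ℕ) : ℕ :=
  ∑ k ∈ Finset.range (n + 1),
    ((2 * k).choose k) ^ 3 * ((2 * n - 2 * k).choose (n - k)) * 16 ^ (n - k)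

/-!
Creative telescoping. With `c` the central binomial coefficients, `w_n` is the sum of
`T(k, m) = c_k ^ 3 c_m 16 ^ m` over `k + m = n`. Applying the recurrence operator to `T(k, ·)`
gives `G(k + 1, m) - G(k, m + 1)` for the certificate `G(k, m) = 32 k ^ 3 c_k ^ 3 c_m 16 ^ m / (m + 1)`;
this is a rational-function identity because `c_(m+1) / c_m = 2 (2m + 1) / (m + 1)`.
Summed over the antidiagonal `k + m = n - 1` the right-hand side telescopes to `G(n, 0)`,
which cancels the terms of `w_(n+1)` and `w_n` that this summation misses.
-/

namespace Finset.Nat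

theorem sum_antidiagonal_sub {M : Type*} [AddCommGroup M] (f : ℕ → ℕ → M) (n : ℕ) :
    ∑ ij ∈ antidiagonal n, (f (ij.1 + 1) ij.2 - f ij.1 (ij.2 + 1)) =
      f (n + 1) 0 - f 0 (n + 1) := by
  have h := sum_antidiagonal_succ (f := fun ij => f ij.1 ij.2) (n := n)
  have h' := sum_antidiagonal_succ' (f := fun ij => f ij.1 ij.2) (n := n)
  rw [sum_sub_distrib, eq_sub_of_add_eq' h.symm, eq_sub_of_add_eq' h'.symm]
  abel

end Finset.Nat

theorem Nat.cast_centralBinom_succ {K : Type*} [Field K] [CharZero K] (n : ℕ) :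
    (Nat.centralBinom (n + 1) : K) = 2 * (2 * n + 1) / (n + 1) * Nat.centralBinom n := by
  rw [div_mul_eq_mul_div, eq_div_iff (Nat.cast_add_one_ne_zero n), mul_comm]
  exact_mod_cast n.succ_mul_centralBinom_succ

def recurrenceOp (n a b c : ℚ) : ℚ :=
  (n + 1) ^ 3 * a - 8 * (2 * n + 1) * (8 * n ^ 2 + 8 * n + 5) * b + 4096 * n ^ 3 * c

theorem recurrenceOp_add (n a b c a' b' c' : ℚ) :
    recurrenceOp n (a + a') (b + b') (c + c') =
      recurrenceOp n a b c + recurrenceOp n a' b' c' := by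
  unfold recurrenceOp
  ring

theorem recurrenceOp_sum {ι : Type*} (s : Finset ι) (n : ℚ) (a b c : ι → ℚ) :
    recurrenceOp n (∑ i ∈ s, a i) (∑ i ∈ s, b i) (∑ i ∈ s, c i) =
      ∑ i ∈ s, recurrenceOp n (a i) (b i) (c i) := by
  simp only [recurrenceOp, mul_sum, sum_add_distrib, sum_sub_distrib]

def wTerm (k m : ℕ) : ℚ :=
  (k.centralBinom : ℚ) ^ 3 * m.centralBinom * 16 ^ m

def wCert (k m : ℕ) : ℚ :=
  32 * k ^ 3 * (k.centralBinom : ℚ) ^ 3 * m.centralBinom * 16 ^ m / (m + 1)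

theorem cast_wSeq_eq_sum_antidiagonal (n : ℕ) :
    (wSeq n : ℚ) = ∑ ij ∈ antidiagonal n, wTerm ij.1 ij.2 := by
  rw [Nat.sum_antidiagonal_eq_sum_range_succ_mk, wSeq]
  push_cast
  refine sum_congr rfl fun k hk => ?_
  have h2 : 2 * n - 2 * k = 2 * (n - k) := by omega
  rw [wTerm, h2, Nat.centralBinom_eq_two_mul_choose, Nat.centralBinom_eq_two_mul_choose]

theorem recurrenceOp_wTerm (k j : ℕ) :
    recurrenceOp ((k : ℚ) + j + 1) (wTerm k (j + 2)) (wTerm k (j + 1)) (wTerm k j) =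
      wCert (k + 1) j - wCert k (j + 1) := by
  simp only [recurrenceOp, wTerm, wCert, Nat.cast_centralBinom_succ (K := ℚ)]
  push_cast
  field_simp
  ring

theorem recurrenceOp_wTerm_boundary (n : ℕ) :
    recurrenceOp n (wTerm (n + 1) 0 + wTerm n 1) (wTerm n 0) 0 = -wCert n 0 := by
  simp only [recurrenceOp, wTerm, wCert, Nat.cast_centralBinom_succ (K := ℚ)]
  push_cast
  field_simp
  ring

theorem recurrenceOp_wSeq_succ (p : ℕ) :
    recurrenceOp ((p : ℚ) + 1) (wSeq (p + 1 + 1)) (wSeq (p + 1)) (wSeq p) = 0 := by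
  simp only [cast_wSeq_eq_sum_antidiagonal, Nat.sum_antidiagonal_succ']
  calc _ = recurrenceOp ((p : ℚ) + 1)
          (wTerm (p + 1 + 1) 0 + wTerm (p + 1) 1) (wTerm (p + 1) 0) 0 +
        ∑ ij ∈ antidiagonal p, recurrenceOp ((p : ℚ) + 1)
          (wTerm ij.1 (ij.2 + 2)) (wTerm ij.1 (ij.2 + 1)) (wTerm ij.1 ij.2) := by
        rw [← recurrenceOp_sum, ← recurrenceOp_add]
        congr 1 <;> ring
    _ = -wCert (p + 1) 0 +
        ∑ ij ∈ antidiagonal p, (wCert (ij.1 + 1) ij.2 - wCert ij.1 (ij.2 + 1)) := by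
        rw [← recurrenceOp_wTerm_boundary]
        push_cast
        congr 1
        refine sum_congr rfl fun ij hij => ?_
        rw [← mem_antidiagonal.mp hij, ← recurrenceOp_wTerm]
        push_cast
        rfl
    _ = 0 := by
        rw [Nat.sum_antidiagonal_sub wCert]
        simp [wCert]

theorem recurrenceOp_wSeq (n : ℕ) :
    recurrenceOp n (wSeq (n + 1)) (wSeq n) (wSeq (n - 1)) = 0 := by
  cases n with
  | zero => norm_num [recurrenceOp, wSeq, sum_range_succ]
  | succ p => exact_mod_cast recurrenceOp_wSeq_succ p

theorem w_recurrence_general (n : ℕ) :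
    ((n : ℤ) + 1) ^ 3 * wSeq (n + 1)
      - 8 * (2 * n + 1) * (8 * n ^ 2 + 8 * n + 5) * wSeq n
      + 4096 * (n : ℤ) ^ 3 * wSeq (n - 1) = 0 := by
  have h := recurrenceOp_wSeq n
  rw [recurrenceOp] at h
  exact_mod_cast h

theorem w_recurrence (n : ℕ) (hn : 1 ≤ n) :
    ((n : ℤ) + 1) ^ 3 * wSeq (n + 1)
      - 8 * (2 * n + 1) * (8 * n ^ 2 + 8 * n + 5) * wSeq n
      + 4096 * (n : ℤ) ^ 3 * wSeq (n - 1) = 0 :=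
  w_recurrence_general n
end
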